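/- arXiv:0903.2647 — 5 statements merged into one kernel-verified Lean document; each statement's English description precedes it below -/
import Mathlib

section
/- For every integer p ≥ 0 there exists a unique function of the form Λ_p(u) = α_0 u + α_1 + α_2/u + ... + α_{p-1}/u^{p-2} − 1/u^{p-1} (a Laurent polynomial in u with highest-order pole −u^{1-p} having coefficient −1 and top degree 1) such that the function z ↦ z^{1−p} f'(z) + Λ_p(f(z)) has a power series expansion at z = 0 containing only powers z^k with k ≥ 2. -/
/-!
Write `f z = z * u z` with `u = dslope f 0`, so `u 0 = f' 0 = 1`. Pulling out `f z ^ (1 - p)`, the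
expression becomes `z ^ (1 - p) * u z ^ (1 - p) * (H z + P (f z))`, where
`H = u ^ (p - 1) * f' - 1` is analytic with `H 0 = 0` and `P w = ∑ j, α j * w ^ (p - j)`. It has
an expansion in the powers `z ^ k`, `k ≥ 2`, exactly when `H + P ∘ f` vanishes to order `p + 1`
at `0`. As `f` is locally invertible, `H = K ∘ f` with `K` analytic, and `H + P ∘ f` vanishes to
the same order as `K + P`. So `P` has to be minus the Taylor polynomial of degree `p` of `K`, which
determines `α`.
-/

open Topology Filter Metric Set

variable {𝕜 : Type*} [NontriviallyNormedField 𝕜]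

theorem AnalyticAt.dslope {E : Type*} [NormedAddCommGroup E] [NormedSpace 𝕜 E] {f : 𝕜 → E}
    {z₀ : 𝕜} (hf : AnalyticAt 𝕜 f z₀) : AnalyticAt 𝕜 (dslope f z₀) z₀ :=
  let ⟨_, hp⟩ := hf
  ⟨_, hp.has_fpower_series_dslope_fslope⟩

theorem zpow_sub_natCast_mul_pow {z : 𝕜} (hz : z ≠ 0) (n N : ℕ) :
    z ^ ((n : ℤ) - N) * z ^ N = z ^ n := by
  rw [← zpow_natCast z N, ← zpow_add₀ hz, sub_add_cancel, zpow_natCast]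

theorem zpow_one_sub_add_sum_eq {z u : 𝕜} (hz : z ≠ 0) (hu : u ≠ 0) (d : 𝕜) {p : ℕ}
    (α : Fin p → 𝕜) :
    z ^ (1 - (p : ℤ)) * d +
        (-(z * u) ^ (1 - (p : ℤ)) + ∑ j : Fin p, α j * (z * u) ^ (1 - (j : ℤ))) =
      z ^ (1 - (p : ℤ)) * (u ^ (1 - (p : ℤ)) *
        (u ^ ((p : ℤ) - 1) * d - 1 + ∑ j : Fin p, α j * (z * u) ^ (p - j))) := by
  have hzu : z * u ≠ 0 := mul_ne_zero hz hu
  have hpow (j : Fin p) :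
      (z * u) ^ (1 - (j : ℤ)) = (z * u) ^ (1 - (p : ℤ)) * (z * u) ^ (p - j) := by
    rw [← zpow_natCast, ← zpow_add₀ hzu, Nat.cast_sub j.is_lt.le]
    ring_nf
  have hu1 : u ^ (1 - (p : ℤ)) * u ^ ((p : ℤ) - 1) = 1 := by
    rw [← zpow_add₀ hu, sub_add_sub_cancel', sub_self, zpow_zero]
  have hsum : ∑ j : Fin p, α j * (z * u) ^ (1 - (j : ℤ)) =
      z ^ (1 - (p : ℤ)) * (u ^ (1 - (p : ℤ)) * ∑ j : Fin p, α j * (z * u) ^ (p - j)) := by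
    simp only [Finset.mul_sum, hpow, mul_zpow]
    exact Finset.sum_congr rfl fun j _ => by ring
  rw [hsum, mul_zpow]
  linear_combination (-(z ^ (1 - (p : ℤ)) * d)) * hu1

variable [CompleteSpace 𝕜]

theorem exists_analyticAt_eventually_hasSum_of_summable {a : ℕ → 𝕜} {z₀ : 𝕜} (hz₀ : z₀ ≠ 0)
    (ha : Summable fun k => a k * z₀ ^ k) :
    ∃ S : 𝕜 → 𝕜, AnalyticAt 𝕜 S 0 ∧ ∀ᶠ z in 𝓝 0, HasSum (fun k => a k * z ^ k) (S z) := by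
  set P := FormalMultilinearSeries.ofScalars 𝕜 a
  have hr : (‖z₀‖₊ : ENNReal) ≤ P.radius := P.le_radius_of_tendsto (l := 0) <| by
    simpa [P, FormalMultilinearSeries.ofScalars_norm] using ha.tendsto_atTop_zero.norm
  have hP := P.hasFPowerSeriesOnBall ((by simpa using hz₀ : (0 : ENNReal) < ‖z₀‖₊).trans_le hr)
  refine ⟨P.sum, hP.analyticAt, ?_⟩
  simpa [P, FormalMultilinearSeries.ofScalars_apply_eq, mul_comm] using
    hP.hasFPowerSeriesAt.eventually_hasSum

theorem exists_eventually_hasSum_pow_add_iff {E G : 𝕜 → 𝕜} (hG : AnalyticAt 𝕜 G 0) (n N : ℕ)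
    (hE : ∀ᶠ z in 𝓝[≠] 0, E z = z ^ ((n : ℤ) - N) * G z) :
    (∃ a : ℕ → 𝕜, ∀ᶠ z in 𝓝[≠] 0, HasSum (fun k => a k * z ^ (k + n)) (E z)) ↔
      (N : ℕ∞) ≤ analyticOrderAt G 0 := by
  rw [natCast_le_analyticOrderAt hG]
  simp only [sub_zero, smul_eq_mul]
  constructor
  · rintro ⟨a, ha⟩
    obtain ⟨z₀, hz₀, hz₀0 : z₀ ≠ 0⟩ := (ha.and self_mem_nhdsWithin).exists
    have hsum : Summable fun k => a k * z₀ ^ k := by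
      refine ((hz₀.mul_left (z₀ ^ n)⁻¹).summable).congr fun k => ?_
      rw [pow_add]
      field_simp
    obtain ⟨S, hS, hSsum⟩ := exists_analyticAt_eventually_hasSum_of_summable hz₀0 hsum
    refine ⟨S, hS, (hG.continuousAt.eventuallyEq_nhds_iff_eventuallyEq_nhdsNE
      (by fun_prop)).mp ?_⟩
    filter_upwards [ha, hE, hSsum.filter_mono nhdsWithin_le_nhds, self_mem_nhdsWithin]
      with z hz hEz hSz (hz0 : z ≠ 0)
    have hES : E z = z ^ ((n : ℤ) - N) * (z ^ N * S z) := by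
      rw [← mul_assoc, zpow_sub_natCast_mul_pow hz0]
      refine hz.unique ?_
      simpa only [pow_add, mul_assoc, mul_left_comm, mul_comm (z ^ n)] using hSz.mul_left (z ^ n)
    exact mul_left_cancel₀ (zpow_ne_zero _ hz0) (hEz.symm.trans hES)
  · rintro ⟨h, ⟨P, hP⟩, hGh⟩
    refine ⟨P.coeff, ?_⟩
    filter_upwards [hE, hGh.filter_mono nhdsWithin_le_nhds,
      hP.eventually_hasSum.filter_mono nhdsWithin_le_nhds, self_mem_nhdsWithin]
      with z hEz hGz hPz (hz0 : z ≠ 0)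
    rw [hEz, hGz, ← mul_assoc, zpow_sub_natCast_mul_pow hz0]
    simpa [P.apply_eq_pow_smul_coeff, pow_add, mul_assoc, mul_left_comm, mul_comm] using
      hPz.mul_left (z ^ n)

theorem iteratedDeriv_add_sum_pow_zero {K : 𝕜 → 𝕜} (hK : AnalyticAt 𝕜 K 0) {p : ℕ}
    (α : Fin p → 𝕜) (i : ℕ) :
    iteratedDeriv i (fun w => K w + ∑ j : Fin p, α j * w ^ (p - j)) 0 =
      iteratedDeriv i K 0 + ∑ j : Fin p, if i = p - j then α j * (p - j).factorial else 0 := by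
  rw [iteratedDeriv_fun_add hK.contDiffAt (by fun_prop),
    iteratedDeriv_fun_sum fun j _ => by fun_prop]
  simp only [iteratedDeriv_const_mul_field, iteratedDeriv_fun_pow_zero, Nat.cast_ite,
    Nat.cast_zero, mul_ite, mul_zero]

variable [CharZero 𝕜]

theorem AnalyticAt.exists_analyticAt_eventuallyEq_comp {f H : 𝕜 → 𝕜} {x : 𝕜}
    (hf : AnalyticAt 𝕜 f x) (hf' : deriv f x ≠ 0) (hH : AnalyticAt 𝕜 H x) :
    ∃ K : 𝕜 → 𝕜, AnalyticAt 𝕜 K (f x) ∧ H =ᶠ[𝓝 x] K ∘ f := by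
  set g := hf.hasStrictDerivAt.localInverse _ _ _ hf'
  have hgfx : g (f x) = x := HasStrictFDerivAt.localInverse_apply_image ..
  refine ⟨H ∘ g, (hgfx ▸ hH).comp (hf.analyticAt_localInverse hf'), ?_⟩
  filter_upwards [hf.hasStrictDerivAt.eventually_left_inverse hf'] with z (hz : g (f z) = z)
  rw [Function.comp_apply, Function.comp_apply, hz]

theorem existsUnique_le_analyticOrderAt_add_sum_pow {K : 𝕜 → 𝕜} (hK : AnalyticAt 𝕜 K 0)
    (hK0 : K 0 = 0) (p : ℕ) :
    ∃! α : Fin p → 𝕜,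
      ((p + 1 : ℕ) : ℕ∞) ≤ analyticOrderAt (fun w => K w + ∑ j : Fin p, α j * w ^ (p - j)) 0 := by
  have hfac (n : ℕ) : (n.factorial : 𝕜) ≠ 0 := Nat.cast_ne_zero.mpr n.factorial_ne_zero
  have hsub (j j' : Fin p) : p - j = p - j' ↔ j' = j := by omega
  have hrange (i : ℕ) (hi : i < p + 1) : i = 0 ∨ ∃ j : Fin p, i = p - j := by
    rcases Nat.eq_zero_or_pos i with h | h
    · exact .inl h
    · exact .inr ⟨⟨p - i, by omega⟩, by simp; omega⟩
  have horder_iff (α : Fin p → 𝕜) : ((p + 1 : ℕ) : ℕ∞) ≤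
      analyticOrderAt (fun w => K w + ∑ j : Fin p, α j * w ^ (p - j)) 0 ↔
      α = fun j : Fin p => -iteratedDeriv (p - j) K 0 / (p - j).factorial := by
    rw [natCast_le_analyticOrderAt_iff_iteratedDeriv_eq_zero (by fun_prop), funext_iff]
    simp only [iteratedDeriv_add_sum_pow_zero hK]
    refine ⟨fun h j => ?_, fun h i hi => ?_⟩
    · have := h (p - j) (by omega)
      simp only [hsub, Finset.sum_ite_eq', Finset.mem_univ, if_true] at this
      rw [eq_div_iff (hfac _)]
      linear_combination this
    obtain rfl | ⟨j, rfl⟩ := hrange i hi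
    · have hpos (j : Fin p) : 0 ≠ p - j := by omega
      simp [hK0, hpos]
    · simp only [hsub, Finset.sum_ite_eq', Finset.mem_univ, if_true, h j]
      rw [div_mul_cancel₀ _ (hfac _)]
      ring
  simpa only [horder_iff] using existsUnique_eq

theorem exists_eventually_hasSum_iff_le_analyticOrderAt {f K : 𝕜 → 𝕜} (hf : AnalyticAt 𝕜 f 0)
    (hf0 : f 0 = 0) (hf' : deriv f 0 ≠ 0) {p : ℕ} (hK : AnalyticAt 𝕜 K 0)
    (hHK : (fun z => dslope f 0 z ^ ((p : ℤ) - 1) * deriv f z - 1) =ᶠ[𝓝 0] K ∘ f)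
    (α : Fin p → 𝕜) :
    (∃ a : ℕ → 𝕜, ∀ᶠ z in 𝓝[≠] 0, HasSum (fun k => a k * z ^ (k + 2))
        (z ^ (1 - (p : ℤ)) * deriv f z +
          (-(f z) ^ (1 - (p : ℤ)) + ∑ j : Fin p, α j * (f z) ^ (1 - ((j : ℕ) : ℤ))))) ↔
      ((p + 1 : ℕ) : ℕ∞) ≤ analyticOrderAt (fun w => K w + ∑ j : Fin p, α j * w ^ (p - j)) 0 := by
  set u := dslope f 0
  have hu0 : u 0 ≠ 0 := by simpa [u, dslope_same] using hf'
  have hfu (z : 𝕜) : f z = z * u z := by simpa [hf0] using (sub_smul_dslope f 0 z).symm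
  have hU : AnalyticAt 𝕜 (fun z => u z ^ (1 - (p : ℤ))) 0 := hf.dslope.zpow hu0
  have hP : AnalyticAt 𝕜 (fun w => K w + ∑ j : Fin p, α j * w ^ (p - j)) (f 0) := by
    rw [hf0]; fun_prop
  rw [exists_eventually_hasSum_pow_add_iff (hU.mul (hP.comp hf)) 2 (p + 1),
    analyticOrderAt_mul hU (hP.comp hf), hU.analyticOrderAt_eq_zero.mpr (zpow_ne_zero _ hu0),
    zero_add, analyticOrderAt_comp_of_deriv_ne_zero hf hf', hf0]
  filter_upwards [hHK.filter_mono nhdsWithin_le_nhds,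
    (hf.dslope.continuousAt.eventually_ne hu0).filter_mono nhdsWithin_le_nhds,
    self_mem_nhdsWithin] with z hHz huz (hz : z ≠ 0)
  have hexp : ((2 : ℕ) : ℤ) - ((p + 1 : ℕ) : ℤ) = 1 - p := by push_cast; ring
  simp only [Function.comp_apply, Pi.mul_apply] at hHz ⊢
  rw [hexp, ← hHz, hfu z, zpow_one_sub_add_sum_eq hz huz]

theorem stmt_0_general (f : ℂ → ℂ)
    (hf : DifferentiableOn ℂ f (ball (0 : ℂ) 1))
    (hf0 : f 0 = 0) (hf1 : deriv f 0 = 1) :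
    ∀ p : ℕ, ∃! α : Fin p → ℂ, ∃ a : ℕ → ℂ,
      ∀ᶠ z in 𝓝[≠] (0 : ℂ),
        HasSum (fun k : ℕ => a k * z ^ (k + 2))
          (z ^ (1 - (p : ℤ)) * deriv f z +
            (-(f z) ^ (1 - (p : ℤ)) + ∑ j : Fin p, α j * (f z) ^ (1 - ((j : ℕ) : ℤ)))) := by
  intro p
  have hfa : AnalyticAt ℂ f 0 := hf.analyticAt (ball_mem_nhds 0 one_pos)
  have hf' : deriv f 0 ≠ 0 := by simp [hf1]
  have hH : AnalyticAt ℂ (fun z => dslope f 0 z ^ ((p : ℤ) - 1) * deriv f z - 1) 0 :=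
    ((hfa.dslope.zpow (by simpa [dslope_same] using hf')).mul hfa.deriv).sub analyticAt_const
  obtain ⟨K, hK, hHK⟩ := hfa.exists_analyticAt_eventuallyEq_comp hf' hH
  rw [hf0] at hK
  have hK0 : K 0 = 0 := by simpa [dslope_same, hf1, hf0] using hHK.eq_of_nhds.symm
  exact (existsUnique_congr
    (exists_eventually_hasSum_iff_le_analyticOrderAt hfa hf0 hf' hK hHK)).mpr
      (existsUnique_le_analyticOrderAt_add_sum_pow hK hK0 p)

/-- Let `f` be univalent on the unit disk, `f 0 = 0`, `f' 0 = 1`, with Taylor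
coefficients `c` (i.e. `f z = ∑ n, c n * z ^ (n+1)`, `c 0 = 1`). Then for every `p ≥ 0` there is a
unique function of the form `Λ_p(u) = α_0 u + α_1 + α_2/u + ⋯ + α_{p-1}/u^{p-2} - 1/u^{p-1}`
(encoded via its coefficients `α : Fin p → ℂ`, the coefficient of `u^{1-p}` being `-1`) such that
`z^{1-p} f'(z) + Λ_p(f z)` has a power series expansion at `0` containing only powers `z^k`, `k ≥ 2`. -/
theorem stmt_0 (f : ℂ → ℂ) (c : ℕ → ℂ)
    (hf : DifferentiableOn ℂ f (ball (0 : ℂ) 1))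
    (hinj : Set.InjOn f (ball (0 : ℂ) 1))
    (hf0 : f 0 = 0) (hf1 : deriv f 0 = 1) (hc0 : c 0 = 1)
    (hc : ∀ z ∈ ball (0 : ℂ) 1, HasSum (fun n : ℕ => c n * z ^ (n + 1)) (f z)) :
    ∀ p : ℕ, ∃! α : Fin p → ℂ, ∃ a : ℕ → ℂ,
      ∀ᶠ z in 𝓝[≠] (0 : ℂ),
        HasSum (fun k : ℕ => a k * z ^ (k + 2))
          (z ^ (1 - (p : ℤ)) * deriv f z +
            (-(f z) ^ (1 - (p : ℤ)) + ∑ j : Fin p, α j * (f z) ^ (1 - ((j : ℕ) : ℤ)))) :=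
  stmt_0_general f hf hf0 hf1
end

section
/- The Grunsky coefficients satisfy the symmetry relation (1/n) β_{n,k} = (1/k) β_{k,n} for all integers n, k ≥ 1. -/
/-!
The quotient `(1/f(u) - 1/f(v)) / (1/u - 1/v)` is symmetric in `u` and `v`. Subtracting the
expansion at `(v, u)` from the one at `(u, v)` therefore gives a double power series
`∑ ((1/n) β_{n,k} - (1/k) β_{k,n}) u^n v^k` summing to `0` near the origin, and the identity
theorem for power series, applied in `u` and then in `v`, makes every coefficient vanish.
-/

open Topology Filter Metric Set

section PowerSeries

variable {𝕜 E : Type*} [NontriviallyNormedField 𝕜] [NormedAddCommGroup E] [NormedSpace 𝕜 E]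

theorem eq_zero_of_eventually_hasSum_pow_smul {a : ℕ → E}
    (h : ∀ᶠ z in 𝓝 (0 : 𝕜), HasSum (fun n => z ^ n • a n) 0) : a = 0 := by
  let p : FormalMultilinearSeries 𝕜 𝕜 E := fun n =>
    ContinuousMultilinearMap.mkPiRing 𝕜 (Fin n) (a n)
  have hp : HasFPowerSeriesAt 0 p 0 := hasFPowerSeriesAt_iff.2 <| by
    simpa [p, FormalMultilinearSeries.coeff] using h
  funext n
  simpa [p, FormalMultilinearSeries.coeff] using congrArg (fun q => q.coeff n) hp.eq_zero

theorem eq_zero_of_eventually_hasSum_pow_succ_smul {a : ℕ → E}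
    (h : ∀ᶠ z in 𝓝[≠] (0 : 𝕜), HasSum (fun n => z ^ (n + 1) • a n) 0) : a = 0 := by
  let b : ℕ → E := fun n => if n = 0 then 0 else a (n - 1)
  suffices b = 0 from funext fun n => by simpa [b] using congrFun this (n + 1)
  refine eq_zero_of_eventually_hasSum_pow_smul (𝕜 := 𝕜) ?_
  -- at `z = 0` the series `∑ z ^ n • b n` sums to `b 0 = 0`, which fills the puncture
  rw [← nhdsNE_sup_pure, eventually_sup, eventually_pure]
  refine ⟨h.mono fun z hz => ?_, ?_⟩
  · rw [← hasSum_nat_add_iff' 1]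
    simpa [b] using hz
  · convert hasSum_zero with n
    rcases n with _ | n <;> simp [b]

theorem eq_zero_of_eventually_hasSum_pow_succ_mul_pow_succ_smul [CompleteSpace E]
    {d : ℕ → ℕ → E}
    (h : ∀ᶠ v in 𝓝[≠] (0 : 𝕜), ∀ᶠ u in 𝓝[≠] (0 : 𝕜),
      HasSum (fun nk : ℕ × ℕ => (u ^ (nk.1 + 1) * v ^ (nk.2 + 1)) • d nk.1 nk.2) 0) :
    d = 0 := by
  funext n
  refine eq_zero_of_eventually_hasSum_pow_succ_smul (𝕜 := 𝕜) ?_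
  filter_upwards [h] with v hv
  have hrow : ∀ m, Summable fun k => v ^ (k + 1) • d m k := by
    obtain ⟨u, hu, hu0⟩ := (hv.and self_mem_nhdsWithin).exists
    intro m
    have hum : u ^ (m + 1) ≠ 0 := pow_ne_zero _ hu0
    simpa [smul_smul, hum] using (hu.summable.prod_factor m).const_smul (u ^ (m + 1))⁻¹
  have hrow_zero : (fun m => ∑' k, v ^ (k + 1) • d m k) = 0 := by
    refine eq_zero_of_eventually_hasSum_pow_succ_smul (𝕜 := 𝕜) ?_
    filter_upwards [hv] with u hu
    refine hu.prod_fiberwise fun m => ?_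
    simpa [mul_smul] using ((hrow m).hasSum.const_smul (u ^ (m + 1)))
  simpa [congrFun hrow_zero n] using (hrow n).hasSum

end PowerSeries

theorem stmt_6_general (f : ℂ → ℂ)
    (β : ℕ → ℕ → ℂ)
    (hβ : ∃ ε > (0 : ℝ), ∀ u v : ℂ, u ≠ 0 → v ≠ 0 → ‖u‖ < ε → ‖v‖ < ε → u ≠ v →
      HasSum (fun nk : ℕ × ℕ =>
          -((1 / ((nk.1 : ℂ) + 1)) * β (nk.1 + 1) (nk.2 + 1) * u ^ (nk.1 + 1) * v ^ (nk.2 + 1)))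
        (Complex.log (((f u)⁻¹ - (f v)⁻¹) / (u⁻¹ - v⁻¹)))) :
    ∀ n k : ℕ, 1 ≤ n → 1 ≤ k → (1 / (n : ℂ)) * β n k = (1 / (k : ℂ)) * β k n := by
  obtain ⟨ε, hε, H⟩ := hβ
  have hquot_symm : ∀ u v : ℂ,
      ((f v)⁻¹ - (f u)⁻¹) / (v⁻¹ - u⁻¹) = ((f u)⁻¹ - (f v)⁻¹) / (u⁻¹ - v⁻¹) :=
    fun u v => by rw [← neg_sub (f u)⁻¹, ← neg_sub u⁻¹, neg_div_neg_eq]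
  have hsmall : ∀ᶠ z in 𝓝[≠] (0 : ℂ), z ≠ 0 ∧ ‖z‖ < ε := by
    filter_upwards [self_mem_nhdsWithin, nhdsWithin_le_nhds (ball_mem_nhds (0 : ℂ) hε)]
      with z hz0 hzε
    exact ⟨hz0, mem_ball_zero_iff.1 hzε⟩
  have hd : (fun n k : ℕ => 1 / ((n : ℂ) + 1) * β (n + 1) (k + 1)
      - 1 / ((k : ℂ) + 1) * β (k + 1) (n + 1)) = 0 := by
    refine eq_zero_of_eventually_hasSum_pow_succ_mul_pow_succ_smul (𝕜 := ℂ) ?_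
    filter_upwards [hsmall] with v ⟨hv0, hvε⟩
    filter_upwards [hsmall, eventually_ne_nhdsWithin hv0.symm] with u ⟨hu0, huε⟩ huv
    have h := ((Equiv.prodComm ℕ ℕ).hasSum_iff.2 (H v u hv0 hu0 hvε huε huv.symm)).sub
      (H u v hu0 hv0 huε hvε huv)
    rw [hquot_symm, sub_self] at h
    convert h using 2 with nk
    simp only [Function.comp_apply, Equiv.prodComm_apply, Prod.fst_swap, Prod.snd_swap,
      smul_eq_mul]
    ring
  intro n k hn hk
  obtain ⟨n, rfl⟩ := Nat.exists_eq_add_of_le' hn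
  obtain ⟨k, rfl⟩ := Nat.exists_eq_add_of_le' hk
  have hnk := congrFun₂ hd n k
  simp only [Pi.zero_apply] at hnk
  push_cast
  linear_combination hnk

/-- The Grunsky coefficients `β_{n,k}` of `h(z) = 1/f(1/z)`, defined by the
expansion `log[(1/f(u) - 1/f(v))/(1/u - 1/v)] = -∑_{n≥1} ∑_{k≥1} (1/n) β_{n,k} u^n v^k` for `u, v`
in a punctured neighborhood of `0` with `u ≠ v`, satisfy the symmetry relation
`(1/n) β_{n,k} = (1/k) β_{k,n}` for all `n, k ≥ 1`. -/
theorem stmt_6 (f : ℂ → ℂ) (c : ℕ → ℂ)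
    (hf : DifferentiableOn ℂ f (ball (0 : ℂ) 1))
    (hinj : Set.InjOn f (ball (0 : ℂ) 1))
    (hf0 : f 0 = 0) (hf1 : deriv f 0 = 1) (hc0 : c 0 = 1)
    (hc : ∀ z ∈ ball (0 : ℂ) 1, HasSum (fun n : ℕ => c n * z ^ (n + 1)) (f z))
    (β : ℕ → ℕ → ℂ)
    (hβ : ∃ ε > (0 : ℝ), ∀ u v : ℂ, u ≠ 0 → v ≠ 0 → ‖u‖ < ε → ‖v‖ < ε → u ≠ v →
      HasSum (fun nk : ℕ × ℕ =>
          -((1 / ((nk.1 : ℂ) + 1)) * β (nk.1 + 1) (nk.2 + 1) * u ^ (nk.1 + 1) * v ^ (nk.2 + 1)))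
        (Complex.log (((f u)⁻¹ - (f v)⁻¹) / (u⁻¹ - v⁻¹)))) :
    ∀ n k : ℕ, 1 ≤ n → 1 ≤ k → (1 / (n : ℂ)) * β n k = (1 / (k : ℂ)) * β k n :=
  stmt_6_general f β hβ
end

section
/- For every fixed w ∈ ℂ and z in a sufficiently small neighborhood of 0 (small enough that w f(z) ≠ 1), one has f(z)/(1 − w f(z)) = ∑_{n≥1} F_n'(w) z^n / n, where F_n' denotes the derivative of the n-th Faber polynomial of h(z) = 1/f(1/z). -/
/-!
Write `g = f / (1 - w f)`. The generating function `z f'/(f - w f²) = (z f'/f) / (1 - w f)` has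
`w`-derivative `z f'/(1 - w f)² = z g'(z)`, so `F_n'(w)` is the `n`-th Taylor coefficient of
`z g'`, which is `n` times that of `g`. Differentiating in `w` commutes with taking Taylor
coefficients because these are Cauchy integrals over a fixed small circle, on which the integrand
depends continuously differentiably on `w`.
-/

open Topology Filter Metric Set

open Complex Real in
theorem hasDerivAt_circleIntegral_of_hasDerivAt {E : Type*} [NormedAddCommGroup E]
    [NormedSpace ℂ E] [CompleteSpace E] {G G' : ℂ → ℂ → E} {w₀ c : ℂ} {ρ R : ℝ}
    (hρ : 0 < ρ) (hR : 0 ≤ R)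
    (hG : ∀ w ∈ closedBall w₀ ρ, ContinuousOn (G w) (sphere c R))
    (hG' : ContinuousOn (Function.uncurry G') (closedBall w₀ ρ ×ˢ sphere c R))
    (hGG' : ∀ w ∈ ball w₀ ρ, ∀ z ∈ sphere c R, HasDerivAt (G · z) (G' w z) w) :
    HasDerivAt (fun w => ∮ z in C(c, R), G w z) (∮ z in C(c, R), G' w₀ z) w₀ := by
  obtain ⟨C, hC⟩ := ((isCompact_closedBall w₀ ρ).prod
    (isCompact_sphere c R)).exists_bound_of_continuousOn hG'
  have hmem : ∀ θ, circleMap c R θ ∈ sphere c R := circleMap_mem_sphere c hR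
  have hderiv_cont : Continuous (deriv (circleMap c R)) := by
    rw [show deriv (circleMap c R) = fun θ => circleMap 0 R θ * I from
      funext (deriv_circleMap c R)]
    fun_prop
  have hcont : ∀ w ∈ closedBall w₀ ρ,
      Continuous fun θ => deriv (circleMap c R) θ • G w (circleMap c R θ) := fun w hw =>
    hderiv_cont.smul ((hG w hw).comp_continuous (continuous_circleMap c R) hmem)
  have hw₀ : w₀ ∈ closedBall w₀ ρ := mem_closedBall_self hρ.le
  refine (intervalIntegral.hasDerivAt_integral_of_dominated_loc_of_deriv_le
    (F' := fun w θ => deriv (circleMap c R) θ • G' w (circleMap c R θ))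
    (bound := fun _ => R * C) (ball_mem_nhds w₀ hρ) ?_ ((hcont w₀ hw₀).intervalIntegrable _ _)
    ?_ ?_ intervalIntegrable_const ?_).2
  · filter_upwards [closedBall_mem_nhds w₀ hρ] with w hw
    exact (hcont w hw).aestronglyMeasurable
  · exact (hderiv_cont.smul ((hG'.comp_continuous (continuous_const.prodMk
      (continuous_circleMap c R)) fun θ => ⟨hw₀, hmem θ⟩))).aestronglyMeasurable
  · refine MeasureTheory.ae_of_all _ fun θ _ w hw => ?_
    rw [norm_smul, deriv_circleMap, norm_mul, norm_circleMap_zero, norm_I, mul_one,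
      abs_of_nonneg hR]
    exact mul_le_mul_of_nonneg_left (hC (w, _) ⟨ball_subset_closedBall hw, hmem θ⟩) hR
  · exact MeasureTheory.ae_of_all _ fun θ _ w hw => (hGG' w hw _ (hmem θ)).const_smul _

open Complex Real in
theorem hasDerivAt_iteratedDeriv_of_hasDerivAt {E : Type*} [NormedAddCommGroup E]
    [NormedSpace ℂ E] [CompleteSpace E] {G G' : ℂ → ℂ → E} {w₀ c : ℂ} {ρ R : ℝ}
    (hρ : 0 < ρ) (hR : 0 < R)
    (hG : ∀ w ∈ closedBall w₀ ρ, DifferentiableOn ℂ (G w) (closedBall c R))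
    (hG'₀ : DifferentiableOn ℂ (G' w₀) (closedBall c R))
    (hG' : ContinuousOn (Function.uncurry G') (closedBall w₀ ρ ×ˢ sphere c R))
    (hGG' : ∀ w ∈ ball w₀ ρ, ∀ z ∈ sphere c R, HasDerivAt (G · z) (G' w z) w) (n : ℕ) :
    HasDerivAt (fun w => iteratedDeriv n (G w) c) (iteratedDeriv n (G' w₀) c) w₀ := by
  set k : ℂ := 2 * π * I / n.factorial
  have hk : k ≠ 0 := div_ne_zero two_pi_I_ne_zero (by exact_mod_cast n.factorial_ne_zero)
  have hkernel : ContinuousOn (fun z : ℂ => 1 / (z - c) ^ (n + 1)) (sphere c R) :=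
    continuousOn_const.div (by fun_prop) fun z hz =>
      pow_ne_zero _ (sub_ne_zero.mpr (ne_of_mem_sphere hz hR.ne'))
  have hint := hasDerivAt_circleIntegral_of_hasDerivAt
    (G := fun w z => (1 / (z - c) ^ (n + 1)) • G w z)
    (G' := fun w z => (1 / (z - c) ^ (n + 1)) • G' w z) hρ hR.le
    (fun w hw => hkernel.smul ((hG w hw).continuousOn.mono sphere_subset_closedBall))
    ((hkernel.comp continuousOn_snd fun p hp => hp.2).smul hG')
    (fun w hw z hz => (hGG' w hw z hz).const_smul _)
  rw [hG'₀.circleIntegral_one_div_sub_center_pow_smul hR n] at hint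
  have hcauchy : (fun w => ∮ z in C(c, R), (1 / (z - c) ^ (n + 1)) • G w z)
      =ᶠ[𝓝 w₀] fun w => k • iteratedDeriv n (G w) c := by
    filter_upwards [closedBall_mem_nhds w₀ hρ] with w hw
    exact (hG w hw).circleIntegral_one_div_sub_center_pow_smul hR n
  convert (hint.congr_of_eventuallyEq hcauchy.symm).const_smul k⁻¹ using 1
  · ext w
    simp only [Pi.smul_apply, inv_smul_smul₀ hk]
  · exact (inv_smul_smul₀ hk _).symm

theorem iteratedDeriv_eq_factorial_mul_of_hasSum {𝕜 : Type*} [NontriviallyNormedField 𝕜]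
    [CompleteSpace 𝕜] [CharZero 𝕜] {h : 𝕜 → 𝕜} {a : ℕ → 𝕜} {x : 𝕜}
    (hs : ∀ᶠ z in 𝓝 0, HasSum (fun n => a n * z ^ n) (h (x + z))) (n : ℕ) :
    iteratedDeriv n h x = n.factorial * a n := by
  have hp : HasFPowerSeriesAt h (FormalMultilinearSeries.ofScalars 𝕜 a) x :=
    hasFPowerSeriesAt_iff.mpr (by simpa [mul_comm] using hs)
  have := congrArg (·.coeff n) (hp.eq_formalMultilinearSeries hp.analyticAt.hasFPowerSeriesAt)
  simp only [FormalMultilinearSeries.coeff_ofScalars] at this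
  rw [this, mul_div_cancel₀ _ (by exact_mod_cast n.factorial_ne_zero)]

theorem iteratedDeriv_succ_id_mul_zero {𝕜 : Type*} [NontriviallyNormedField 𝕜] {h : 𝕜 → 𝕜}
    {n : ℕ} (hh : ContDiffAt 𝕜 (n + 1) h 0) :
    iteratedDeriv (n + 1) (fun z => z * h z) 0 = (n + 1) * iteratedDeriv n h 0 := by
  rw [iteratedDeriv_fun_mul (f := fun z => z) contDiffAt_id hh, Finset.sum_eq_single 1]
  · simp
  · intro i _ hi
    simp [iteratedDeriv_fun_id_zero, hi]
  · simp

theorem hasDerivAt_div_one_sub_mul {𝕜 : Type*} [NontriviallyNormedField 𝕜] (a b w : 𝕜)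
    (h : 1 - w * b ≠ 0) :
    HasDerivAt (fun w => a / (1 - w * b)) (a * b / (1 - w * b) ^ 2) w := by
  refine ((hasDerivAt_const w a).div (((hasDerivAt_id w).mul_const b).const_sub 1) h).congr_deriv ?_
  simp only [id, zero_mul, one_mul, zero_sub, mul_neg, neg_neg]

theorem HasDerivAt.div_one_sub_mul {𝕜 : Type*} [NontriviallyNormedField 𝕜] {f : 𝕜 → 𝕜}
    {f' z : 𝕜} (hf : HasDerivAt f f' z) (w : 𝕜) (h : 1 - w * f z ≠ 0) :
    HasDerivAt (fun ζ => f ζ / (1 - w * f ζ)) (f' / (1 - w * f z) ^ 2) z := by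
  refine (hf.div ((hf.const_mul w).const_sub 1) h).congr_deriv ?_
  field_simp
  ring

theorem eq_mul_dslope_of_map_zero {𝕜 : Type*} [NontriviallyNormedField 𝕜] {f : 𝕜 → 𝕜}
    (hf0 : f 0 = 0) (z : 𝕜) : f z = z * dslope f 0 z := by
  simpa [hf0] using (sub_smul_dslope f 0 z).symm

section FaberKernel

variable {f : ℂ → ℂ}

/-- `z f'(z) / (f(z) - w f(z)²)` with its removable singularity at `z = 0` filled in. -/
noncomputable def faberKernel (f : ℂ → ℂ) (w z : ℂ) : ℂ :=
  deriv f z / dslope f 0 z / (1 - w * f z)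

theorem faberKernel_eq_of_ne_zero (hf0 : f 0 = 0) (w : ℂ) {z : ℂ} (hz : z ≠ 0) :
    z * deriv f z / (f z - w * f z ^ 2) = faberKernel f w z := by
  rw [faberKernel, eq_mul_dslope_of_map_zero hf0 z, div_div,
    show z * dslope f 0 z - w * (z * dslope f 0 z) ^ 2
      = z * (dslope f 0 z * (1 - w * (z * dslope f 0 z))) by ring,
    mul_div_mul_left _ _ hz]

theorem faberKernel_zero (hf0 : f 0 = 0) (hf1 : deriv f 0 = 1) (w : ℂ) :
    faberKernel f w 0 = 1 := by
  simp [faberKernel, dslope_same, hf0, hf1]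

theorem eventually_hasSum_faberKernel (hf0 : f 0 = 0) (hf1 : deriv f 0 = 1)
    {F : ℕ → Polynomial ℂ} (hF0 : F 0 = 1)
    (hF : ∀ w : ℂ, ∀ᶠ z in 𝓝[≠] (0 : ℂ),
      HasSum (fun n : ℕ => (F n).eval w * z ^ n) (z * deriv f z / (f z - w * (f z) ^ 2)))
    (w : ℂ) :
    ∀ᶠ z in 𝓝 (0 : ℂ), HasSum (fun n : ℕ => (F n).eval w * z ^ n) (faberKernel f w z) := by
  filter_upwards [eventually_nhdsWithin_iff.mp (hF w)] with z hz
  rcases eq_or_ne z 0 with rfl | hz0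
  · rw [faberKernel_zero hf0 hf1]
    convert hasSum_single (f := fun n : ℕ => (F n).eval w * 0 ^ n) 0 fun n hn => by
      simp [zero_pow hn]
    simp [hF0]
  · rw [← faberKernel_eq_of_ne_zero hf0 w hz0]
    exact hz hz0

theorem hasDerivAt_faberKernel_param (hf0 : f 0 = 0) {w z : ℂ} (hu : dslope f 0 z ≠ 0)
    (hden : 1 - w * f z ≠ 0) :
    HasDerivAt (fun w => faberKernel f w z) (z * deriv f z / (1 - w * f z) ^ 2) w := by
  refine (hasDerivAt_div_one_sub_mul (deriv f z / dslope f 0 z) (f z) w hden).congr_deriv ?_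
  rw [eq_mul_dslope_of_map_zero hf0 z]
  field_simp

theorem exists_closedBall_faberKernel_regular (hf : DifferentiableOn ℂ f (ball 0 1))
    (hf0 : f 0 = 0) (hf1 : deriv f 0 = 1) (w : ℂ) :
    ∃ r > 0, closedBall (0 : ℂ) r ⊆ ball 0 1 ∧ ∀ z ∈ closedBall (0 : ℂ) r,
      dslope f 0 z ≠ 0 ∧ ∀ w' ∈ closedBall w 1, 1 - w' * f z ≠ 0 := by
  have hdiff : DifferentiableAt ℂ f 0 := hf.differentiableAt (ball_mem_nhds 0 one_pos)
  have hu : ∀ᶠ z in 𝓝 (0 : ℂ), dslope f 0 z ≠ 0 :=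
    (continuousAt_dslope_same.mpr hdiff).eventually_ne (by simp [dslope_same, hf1])
  have hsmall : ∀ᶠ z in 𝓝 (0 : ℂ), ‖f z‖ < (‖w‖ + 1)⁻¹ := by
    refine hdiff.continuousAt.norm.eventually (gt_mem_nhds ?_)
    simp only [hf0, norm_zero]
    positivity
  obtain ⟨r, hr, hsub⟩ := nhds_basis_closedBall.mem_iff.mp
    (inter_mem (ball_mem_nhds (0 : ℂ) one_pos) (hu.and hsmall))
  refine ⟨r, hr, fun z hz => (hsub hz).1, fun z hz => ⟨(hsub hz).2.1, fun w' hw' => ?_⟩⟩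
  have hw' : ‖w'‖ ≤ ‖w‖ + 1 := by
    simpa using norm_le_norm_add_norm_sub' w' w |>.trans (by simpa [dist_eq_norm] using hw')
  refine sub_ne_zero.mpr fun h => ?_
  have : ‖w' * f z‖ < 1 := by
    rw [norm_mul]
    calc ‖w'‖ * ‖f z‖ ≤ (‖w‖ + 1) * ‖f z‖ := by gcongr
      _ < (‖w‖ + 1) * (‖w‖ + 1)⁻¹ := by gcongr; exact (hsub hz).2.2
      _ = 1 := by field_simp
  simp [← h] at this

theorem hasDerivAt_iteratedDeriv_faberKernel (hf : DifferentiableOn ℂ f (ball 0 1))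
    (hf0 : f 0 = 0) (hf1 : deriv f 0 = 1) (w : ℂ) (n : ℕ) :
    HasDerivAt (fun w' => iteratedDeriv n (faberKernel f w') 0)
      (iteratedDeriv n (fun z => z * deriv f z / (1 - w * f z) ^ 2) 0) w := by
  obtain ⟨r, hr, hball, hreg⟩ := exists_closedBall_faberKernel_regular hf hf0 hf1 w
  have hdf : DifferentiableOn ℂ (deriv f) (ball 0 1) := hf.deriv isOpen_ball
  have hu : DifferentiableOn ℂ (dslope f 0) (ball 0 1) :=
    (Complex.differentiableOn_dslope (ball_mem_nhds 0 one_pos)).mpr hf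
  have hw : w ∈ closedBall w 1 := mem_closedBall_self zero_le_one
  have hsnd : MapsTo Prod.snd (closedBall w 1 ×ˢ sphere (0 : ℂ) r) (ball 0 1) :=
    fun p hp => hball (sphere_subset_closedBall hp.2)
  refine hasDerivAt_iteratedDeriv_of_hasDerivAt
    (G' := fun w z => z * deriv f z / (1 - w * f z) ^ 2) one_pos hr (fun w' hw' => ?_) ?_ ?_
    (fun w' hw' z hz => ?_) n
  · exact ((hdf.mono hball).div (hu.mono hball) fun z hz => (hreg z hz).1).div
      ((differentiableOn_const 1).sub ((hf.mono hball).const_mul w'))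
      fun z hz => (hreg z hz).2 w' hw'
  · exact (differentiableOn_id.mul (hdf.mono hball)).div
      (((differentiableOn_const 1).sub ((hf.mono hball).const_mul w)).pow 2)
      fun z hz => pow_ne_zero 2 ((hreg z hz).2 w hw)
  · exact (continuousOn_snd.mul (hdf.continuousOn.comp continuousOn_snd hsnd)).div
      ((continuousOn_const.sub (continuousOn_fst.mul
        (hf.continuousOn.comp continuousOn_snd hsnd))).pow 2)
      fun p hp => pow_ne_zero 2 ((hreg p.2 (sphere_subset_closedBall hp.2)).2 p.1 hp.1)
  · have hz' := hreg z (sphere_subset_closedBall hz)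
    exact hasDerivAt_faberKernel_param hf0 hz'.1 (hz'.2 w' (ball_subset_closedBall hw'))

theorem eventually_hasDerivAt_div_one_sub_mul (hf : DifferentiableOn ℂ f (ball 0 1))
    (hf0 : f 0 = 0) (w : ℂ) :
    ∀ᶠ z in 𝓝 (0 : ℂ),
      HasDerivAt (fun ζ => f ζ / (1 - w * f ζ)) (deriv f z / (1 - w * f z) ^ 2) z := by
  have hden : ∀ᶠ z in 𝓝 (0 : ℂ), 1 - w * f z ≠ 0 :=
    ((hf.differentiableAt (ball_mem_nhds 0 one_pos)).continuousAt.const_mul w).const_sub 1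
      |>.eventually_ne (by simp [hf0])
  filter_upwards [ball_mem_nhds (0 : ℂ) one_pos, hden] with z hz hz'
  exact (hf.differentiableAt (isOpen_ball.mem_nhds hz)).hasDerivAt.div_one_sub_mul w hz'

theorem analyticAt_div_one_sub_mul (hf : DifferentiableOn ℂ f (ball 0 1)) (hf0 : f 0 = 0)
    (w : ℂ) : AnalyticAt ℂ (fun z => f z / (1 - w * f z)) 0 :=
  Complex.analyticAt_iff_eventually_differentiableAt.mpr
    ((eventually_hasDerivAt_div_one_sub_mul hf hf0 w).mono fun _ hz => hz.differentiableAt)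

theorem iteratedDeriv_succ_faberKernel_paramDeriv (hf : DifferentiableOn ℂ f (ball 0 1))
    (hf0 : f 0 = 0) (w : ℂ) (n : ℕ) :
    iteratedDeriv (n + 1) (fun z => z * deriv f z / (1 - w * f z) ^ 2) 0
      = (n + 1) * iteratedDeriv (n + 1) (fun z => f z / (1 - w * f z)) 0 := by
  have hg := eventually_hasDerivAt_div_one_sub_mul hf hf0 w
  have hgA := analyticAt_div_one_sub_mul hf hf0 w
  have heq : (fun z => z * deriv f z / (1 - w * f z) ^ 2)
      =ᶠ[𝓝 0] fun z => z * deriv (fun ζ => f ζ / (1 - w * f ζ)) z := by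
    filter_upwards [hg] with z hz
    rw [hz.deriv, mul_div_assoc]
  rw [heq.iteratedDeriv_eq, iteratedDeriv_succ_id_mul_zero hgA.deriv.contDiffAt,
    ← iteratedDeriv_succ']

theorem eval_derivative_div_eq_iteratedDeriv_div (hf : DifferentiableOn ℂ f (ball 0 1))
    (hf0 : f 0 = 0) (hf1 : deriv f 0 = 1) {F : ℕ → Polynomial ℂ}
    (hF : ∀ w : ℂ, ∀ᶠ z in 𝓝 (0 : ℂ),
      HasSum (fun n : ℕ => (F n).eval w * z ^ n) (faberKernel f w z)) (w : ℂ) (n : ℕ) :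
    (Polynomial.derivative (F (n + 1))).eval w / ((n : ℂ) + 1)
      = iteratedDeriv (n + 1) (fun z => f z / (1 - w * f z)) 0 / (n + 1).factorial := by
  have hcoeff : (fun w' => iteratedDeriv (n + 1) (faberKernel f w') 0)
      = fun w' => ((n + 1).factorial : ℂ) * (F (n + 1)).eval w' :=
    funext fun w' => iteratedDeriv_eq_factorial_mul_of_hasSum (x := 0) (h := faberKernel f w')
      (by simpa only [zero_add] using hF w') (n + 1)
  have hderiv := hasDerivAt_iteratedDeriv_faberKernel hf hf0 hf1 w (n + 1)
  rw [hcoeff, iteratedDeriv_succ_faberKernel_paramDeriv hf hf0 w n] at hderiv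
  have hfaber := (((F (n + 1)).hasDerivAt w).const_mul _).unique hderiv
  rw [div_eq_div_iff (Nat.cast_add_one_ne_zero n) (by exact_mod_cast (n + 1).factorial_ne_zero)]
  linear_combination hfaber

end FaberKernel

theorem stmt_9_general (f : ℂ → ℂ)
    (hf : DifferentiableOn ℂ f (ball (0 : ℂ) 1))
    (hf0 : f 0 = 0) (hf1 : deriv f 0 = 1)
    (F : ℕ → Polynomial ℂ) (hF0 : F 0 = 1)
    (hF : ∀ w : ℂ, ∀ᶠ z in 𝓝[≠] (0 : ℂ),
      HasSum (fun n : ℕ => (F n).eval w * z ^ n) (z * deriv f z / (f z - w * (f z) ^ 2))) :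
    ∀ w : ℂ, ∀ᶠ z in 𝓝 (0 : ℂ),
      HasSum (fun n : ℕ =>
          (Polynomial.derivative (F (n + 1))).eval w / ((n : ℂ) + 1) * z ^ (n + 1))
        (f z / (1 - w * f z)) := by
  intro w
  filter_upwards [hasFPowerSeriesAt_iff.mp (analyticAt_div_one_sub_mul hf hf0 w).hasFPowerSeriesAt]
    with z hz
  simp only [zero_add, FormalMultilinearSeries.coeff_ofScalars, smul_eq_mul] at hz
  simp_rw [eval_derivative_div_eq_iteratedDeriv_div hf hf0 hf1
    (eventually_hasSum_faberKernel hf0 hf1 hF0 hF) w, mul_comm _ (z ^ _)]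
  simpa [hf0] using (hasSum_nat_add_iff' 1).mpr hz

/-- With `F_n` the Faber polynomials of `h(z) = 1/f(1/z)`: for every fixed
`w : ℂ` and `z` in a sufficiently small neighborhood of `0`,
`f(z)/(1 - w f(z)) = ∑_{n≥1} F_n'(w) z^n / n`. -/
theorem stmt_9 (f : ℂ → ℂ) (c : ℕ → ℂ)
    (hf : DifferentiableOn ℂ f (ball (0 : ℂ) 1))
    (hinj : Set.InjOn f (ball (0 : ℂ) 1))
    (hf0 : f 0 = 0) (hf1 : deriv f 0 = 1) (hc0 : c 0 = 1)
    (hc : ∀ z ∈ ball (0 : ℂ) 1, HasSum (fun n : ℕ => c n * z ^ (n + 1)) (f z))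
    (F : ℕ → Polynomial ℂ) (hF0 : F 0 = 1)
    (hF : ∀ w : ℂ, ∀ᶠ z in 𝓝[≠] (0 : ℂ),
      HasSum (fun n : ℕ => (F n).eval w * z ^ n) (z * deriv f z / (f z - w * (f z) ^ 2))) :
    ∀ w : ℂ, ∀ᶠ z in 𝓝 (0 : ℂ),
      HasSum (fun n : ℕ =>
          (Polynomial.derivative (F (n + 1))).eval w / ((n : ℂ) + 1) * z ^ (n + 1))
        (f z / (1 - w * f z)) :=
  stmt_9_general f hf hf0 hf1 F hF0 hF
end

section
/- For every integer p ≥ 2, a_p^p = (p+1) c_p − [ β_{p−1,1} + 2 c_1 β_{p−2,1} + 3 c_2 β_{p−3,1} + ... + (p−1) c_{p−2} β_{1,1} ], and a_1^1 = 2 c_1. -/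
/-!
Put `ψ(z) = 1/z - 1/f(z)`. The coefficient of `v` in the Grunsky expansion is the
`v`-derivative at `v = 0` of the logarithm of the Grunsky quotient, namely `1/u - 1/f(u) - c₁`;
hence `ψ(u) = c₁ - ∑ₙ β_{n,1} uⁿ / n`. Then `z² f'/f² = 1 + z² ψ'(z) = 1 - ∑ₙ β_{n,1} z^{n+1}`,
and multiplying by `f'(z) = ∑ₙ (n+1) cₙ zⁿ` and comparing coefficients with `z² f'²/f²` gives
the formula. These functions are only known on a punctured disc, so coefficients are compared
through the uniqueness of power series expansions on a punctured neighbourhood of `0`.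
-/

open Topology Filter Metric Set FormalMultilinearSeries Finset.HasAntidiagonal

def seqCons {α : Type*} (w : α) (A : ℕ → α) : ℕ → α
  | 0 => w
  | n + 1 => A n

theorem hasSum_seqCons_mul_pow_iff {R : Type*} [Ring R] [TopologicalSpace R]
    [IsTopologicalAddGroup R] {w z s : R} {A : ℕ → R} :
    HasSum (fun n => seqCons w A n * z ^ n) s ↔
      HasSum (fun n => A n * z ^ (n + 1)) (s - w) := by
  rw [← hasSum_nat_add_iff' 1]
  simp [seqCons]

theorem HasSum.prod_fiberwise_snd {𝕜 β γ : Type*} [NormedField 𝕜] [CompleteSpace 𝕜]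
    {b : β × γ → 𝕜} {w : γ → 𝕜} {S : 𝕜} (h : HasSum (fun x => b x * w x.2) S) :
    HasSum (fun k => (∑' n, b (n, k)) * w k) S := by
  have hswap := (Equiv.prodComm γ β).hasSum_iff.mpr h
  refine hswap.prod_fiberwise fun k => ?_
  rw [← tsum_mul_right]
  exact (hswap.summable.prod_factor k).hasSum

section PowerSeries

variable {𝕜 : Type*} [NontriviallyNormedField 𝕜]

theorem hasFPowerSeriesAt_ofScalars_iff {A : ℕ → 𝕜} {g : 𝕜 → 𝕜} :
    HasFPowerSeriesAt g (ofScalars 𝕜 A) 0 ↔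
      ∀ᶠ z in 𝓝 0, HasSum (fun n => A n * z ^ n) (g z) := by
  simp [hasFPowerSeriesAt_iff, coeff_ofScalars, smul_eq_mul, mul_comm]

theorem HasFPowerSeriesAt.hasFPowerSeriesAt_deriv [CompleteSpace 𝕜] {g : 𝕜 → 𝕜}
    {p : FormalMultilinearSeries 𝕜 𝕜 𝕜} {x : 𝕜} (hp : HasFPowerSeriesAt g p x) :
    HasFPowerSeriesAt (deriv g) (ofScalars 𝕜 fun n => (n + 1) * p.coeff (n + 1)) x := by
  obtain ⟨r, hr⟩ := hp
  have hd := (ContinuousLinearMap.apply 𝕜 𝕜 (1 : 𝕜)).comp_hasFPowerSeriesOnBall hr.fderiv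
  have hderiv : (ContinuousLinearMap.apply 𝕜 𝕜 (1 : 𝕜)) ∘ fderiv 𝕜 g = deriv g := rfl
  have hcoeff : ∀ n, ((ContinuousLinearMap.apply 𝕜 𝕜 (1 : 𝕜)).compFormalMultilinearSeries
      p.derivSeries).coeff n = (ofScalars 𝕜 fun n => (n + 1) * p.coeff (n + 1)).coeff n := by
    intro n
    change p.derivSeries.coeff n 1 = _
    rw [derivSeries_coeff_one, coeff_ofScalars, nsmul_eq_mul]
    push_cast
    rfl
  have hsum := hd.hasFPowerSeriesAt
  rw [hasFPowerSeriesAt_iff, hderiv] at hsum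
  rw [hasFPowerSeriesAt_iff]
  simpa only [hcoeff] using hsum

end PowerSeries

/-- Only a punctured neighbourhood of `0` is used, since functions such as `z² f'(z)² / f(z)²`
take junk values at `0`. -/
def HasPuncturedPowerSeries (A : ℕ → ℂ) (g : ℂ → ℂ) : Prop :=
  ∀ᶠ z in 𝓝[≠] (0 : ℂ), HasSum (fun n => A n * z ^ n) (g z)

theorem HasFPowerSeriesAt.hasPuncturedPowerSeries {g : ℂ → ℂ}
    {p : FormalMultilinearSeries ℂ ℂ ℂ} (hp : HasFPowerSeriesAt g p 0) :
    HasPuncturedPowerSeries (fun n => p.coeff n) g := by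
  rw [hasFPowerSeriesAt_iff] at hp
  filter_upwards [nhdsWithin_le_nhds hp] with z hz
  simpa [smul_eq_mul, mul_comm] using hz

namespace HasPuncturedPowerSeries

variable {A B : ℕ → ℂ} {g h : ℂ → ℂ}

theorem congr (hA : HasPuncturedPowerSeries A g) (hgh : g =ᶠ[𝓝[≠] 0] h) :
    HasPuncturedPowerSeries A h := by
  filter_upwards [hA, hgh] with z hz hgz
  rwa [← hgz]

theorem hasFPowerSeriesAt_update (h : HasPuncturedPowerSeries A g) :
    HasFPowerSeriesAt (Function.update g 0 (A 0)) (ofScalars ℂ A) 0 := by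
  rw [hasFPowerSeriesAt_ofScalars_iff]
  filter_upwards [eventually_nhdsWithin_iff.mp h] with z hz
  rcases eq_or_ne z 0 with rfl | hz0
  · simpa using hasSum_single (f := fun n => A n * (0 : ℂ) ^ n) 0 (by simp +contextual)
  · simpa [hz0] using hz hz0

theorem unique (hA : HasPuncturedPowerSeries A g) (hB : HasPuncturedPowerSeries B g) :
    A = B := by
  have hAB : Function.update g 0 (A 0) =ᶠ[𝓝 0] Function.update g 0 (B 0) := by
    rw [← hA.hasFPowerSeriesAt_update.continuousAt.eventuallyEq_nhds_iff_eventuallyEq_nhdsNE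
      hB.hasFPowerSeriesAt_update.continuousAt]
    exact (Function.update_eventuallyEq_nhdsNE g 0 0 _).trans
      (Function.update_eventuallyEq_nhdsNE g 0 0 _).symm
  exact ofScalars_series_injective ℂ ℂ <|
    hA.hasFPowerSeriesAt_update.eq_formalMultilinearSeries_of_eventually
      hB.hasFPowerSeriesAt_update hAB

theorem coeff_one_eq_deriv (h : HasPuncturedPowerSeries A g) (hg : AnalyticAt ℂ g 0) :
    A 1 = deriv g 0 := by
  obtain ⟨p, hp⟩ := hg
  rw [h.unique hp.hasPuncturedPowerSeries, hp.deriv]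
  rfl

protected theorem deriv (h : HasPuncturedPowerSeries A g) :
    HasPuncturedPowerSeries (fun n => (n + 1) * A (n + 1)) (deriv g) := by
  have := h.hasFPowerSeriesAt_update.hasFPowerSeriesAt_deriv.hasPuncturedPowerSeries
  simp only [coeff_ofScalars] at this
  exact this.congr (Function.update_eventuallyEq_nhdsNE g 0 0 _).nhdsNE_deriv

protected theorem mul (hA : HasPuncturedPowerSeries A g) (hB : HasPuncturedPowerSeries B h) :
    HasPuncturedPowerSeries (fun n => ∑ kl ∈ antidiagonal n, A kl.1 * B kl.2)
      (fun z => g z * h z) := by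
  filter_upwards [hA, hB] with z hgz hhz
  have hg := hgz.summable.norm
  have hh := hhz.summable.norm
  have hprod : HasSum
      (fun n => ∑ kl ∈ antidiagonal n, A kl.1 * z ^ kl.1 * (B kl.2 * z ^ kl.2)) (g z * h z) := by
    rw [← hgz.tsum_eq, ← hhz.tsum_eq,
      tsum_mul_tsum_eq_tsum_sum_antidiagonal_of_summable_norm hg hh]
    exact (summable_norm_sum_mul_antidiagonal_of_summable_norm hg hh).of_norm.hasSum
  convert hprod using 2 with n
  rw [Finset.sum_mul]
  refine Finset.sum_congr rfl fun kl hkl => ?_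
  rw [← mem_antidiagonal.mp hkl, pow_add]
  ring

protected theorem seqCons (h : HasPuncturedPowerSeries A g) (w : ℂ) :
    HasPuncturedPowerSeries (seqCons w A) (fun z => w + z * g z) := by
  filter_upwards [h] with z hz
  rw [hasSum_seqCons_mul_pow_iff, add_sub_cancel_left]
  simpa [pow_succ', mul_assoc, mul_left_comm] using hz.mul_left z

end HasPuncturedPowerSeries

section Grunsky

variable {f : ℂ → ℂ} {p : FormalMultilinearSeries ℂ ℂ ℂ} {u : ℂ}

/-- The Grunsky quotient `(1/f(u) - 1/f(v)) / (1/u - 1/v)` with numerator and denominator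
multiplied by `v`, which removes its singularity at `v = 0`. -/
noncomputable def grunskyQuotient (f : ℂ → ℂ) (u v : ℂ) : ℂ :=
  (v * (f u)⁻¹ - (dslope f 0 v)⁻¹) / (v * u⁻¹ - 1)

theorem grunskyQuotient_eq (hf0 : f 0 = 0) {v : ℂ} (hv : v ≠ 0) :
    grunskyQuotient f u v = ((f u)⁻¹ - (f v)⁻¹) / (u⁻¹ - v⁻¹) := by
  rw [grunskyQuotient, dslope_of_ne f hv, slope_def_field, hf0, sub_zero, sub_zero,
    ← mul_div_mul_left ((f u)⁻¹ - (f v)⁻¹) (u⁻¹ - v⁻¹) hv]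
  congr 1
  · rw [div_eq_mul_inv, mul_inv, inv_inv]
    ring
  · field_simp

theorem grunskyQuotient_zero (hf1 : deriv f 0 = 1) : grunskyQuotient f u 0 = 1 := by
  simp [grunskyQuotient, hf1]

theorem analyticAt_grunskyQuotient (hp : HasFPowerSeriesAt f p 0) (hf1 : deriv f 0 = 1) :
    AnalyticAt ℂ (grunskyQuotient f u) 0 := by
  have hS := hp.has_fpower_series_dslope_fslope.analyticAt
  exact ((analyticAt_id.mul analyticAt_const).sub (hS.inv (by simp [hf1]))).div
    ((analyticAt_id.mul analyticAt_const).sub analyticAt_const) (by simp)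

theorem hasDerivAt_grunskyQuotient (hp : HasFPowerSeriesAt f p 0) (hf1 : deriv f 0 = 1) :
    HasDerivAt (grunskyQuotient f u) (u⁻¹ - (f u)⁻¹ - p.coeff 2) 0 := by
  have hS : HasDerivAt (dslope f 0) (p.coeff 2) 0 := by
    simpa [coeff_fslope] using hp.has_fpower_series_dslope_fslope.hasDerivAt
  have hnum := ((hasDerivAt_id (0 : ℂ)).mul_const (f u)⁻¹).sub (hS.inv (by simp [hf1]))
  have hden := ((hasDerivAt_id (0 : ℂ)).mul_const u⁻¹).sub_const 1
  refine (hnum.div hden (by simp) : HasDerivAt (grunskyQuotient f u) _ 0).congr_deriv ?_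
  simp only [id_eq, Pi.sub_apply, Pi.inv_apply, dslope_same, hf1]
  ring

theorem coeff_zero_eq_of_hasSum_log (hp : HasFPowerSeriesAt f p 0) (hf0 : f 0 = 0)
    (hf1 : deriv f 0 = 1) {B : ℕ → ℂ}
    (hB : ∀ᶠ v in 𝓝[≠] (0 : ℂ), HasSum (fun k => B k * v ^ (k + 1))
      (Complex.log (((f u)⁻¹ - (f v)⁻¹) / (u⁻¹ - v⁻¹)))) :
    B 0 = u⁻¹ - (f u)⁻¹ - p.coeff 2 := by
  have hslit : grunskyQuotient f u 0 ∈ Complex.slitPlane := by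
    simp [grunskyQuotient_zero hf1]
  have hseries : HasPuncturedPowerSeries (seqCons 0 B)
      (fun v => Complex.log (grunskyQuotient f u v)) := by
    filter_upwards [hB, self_mem_nhdsWithin] with v hv hv0
    rwa [hasSum_seqCons_mul_pow_iff, sub_zero, grunskyQuotient_eq hf0 hv0]
  have h := hseries.coeff_one_eq_deriv ((analyticAt_grunskyQuotient hp hf1).clog hslit)
  rwa [((hasDerivAt_grunskyQuotient hp hf1).clog hslit).deriv, grunskyQuotient_zero hf1,
    div_one] at h

theorem hasPuncturedPowerSeries_inv_sub_inv (hp : HasFPowerSeriesAt f p 0) (hf0 : f 0 = 0)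
    (hf1 : deriv f 0 = 1) {b : ℕ → ℕ → ℂ} {ε : ℝ} (hε : 0 < ε)
    (hb : ∀ u v : ℂ, u ≠ 0 → v ≠ 0 → ‖u‖ < ε → ‖v‖ < ε → u ≠ v →
      HasSum (fun nk : ℕ × ℕ => b nk.1 nk.2 * u ^ (nk.1 + 1) * v ^ (nk.2 + 1))
        (Complex.log (((f u)⁻¹ - (f v)⁻¹) / (u⁻¹ - v⁻¹)))) :
    HasPuncturedPowerSeries (seqCons (p.coeff 2) fun n => b n 0) (fun u => u⁻¹ - (f u)⁻¹) := by
  filter_upwards [nhdsWithin_le_nhds (ball_mem_nhds (0 : ℂ) hε), self_mem_nhdsWithin]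
    with u huε hu0
  rw [mem_ball_zero_iff] at huε
  have hv : ∀ᶠ v in 𝓝[≠] (0 : ℂ),
      HasSum (fun nk : ℕ × ℕ => b nk.1 nk.2 * u ^ (nk.1 + 1) * v ^ (nk.2 + 1))
        (Complex.log (((f u)⁻¹ - (f v)⁻¹) / (u⁻¹ - v⁻¹))) := by
    filter_upwards [nhdsWithin_le_nhds (ball_mem_nhds (0 : ℂ) (norm_pos_iff.mpr hu0)),
      self_mem_nhdsWithin] with v hvu hv0
    rw [mem_ball_zero_iff] at hvu
    exact hb u v hu0 hv0 huε (hvu.trans huε) (by rintro rfl; exact hvu.false)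
  have hcol := coeff_zero_eq_of_hasSum_log hp hf0 hf1 <| hv.mono fun v hv =>
    HasSum.prod_fiberwise_snd (b := fun nk => b nk.1 nk.2 * u ^ (nk.1 + 1)) hv
  obtain ⟨v, hv, hv0⟩ := (hv.and self_mem_nhdsWithin).exists
  have hsum : Summable fun n => b n 0 * u ^ (n + 1) := by
    have := ((Equiv.prodComm ℕ ℕ).summable_iff.mpr hv.summable).prod_factor 0
    exact (summable_mul_right_iff (pow_ne_zero 1 hv0)).mp this
  rw [hasSum_seqCons_mul_pow_iff, ← hcol]
  exact hsum.hasSum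

end Grunsky

theorem hasFPowerSeriesAt_of_hasSum_ball {f : ℂ → ℂ} {c : ℕ → ℂ} {r : ℝ} (hr : 0 < r)
    (hc : ∀ z ∈ ball (0 : ℂ) r, HasSum (fun n => c n * z ^ (n + 1)) (f z)) :
    HasFPowerSeriesAt f (ofScalars ℂ (seqCons 0 c)) 0 := by
  rw [hasFPowerSeriesAt_ofScalars_iff]
  filter_upwards [ball_mem_nhds (0 : ℂ) hr] with z hz
  simpa [hasSum_seqCons_mul_pow_iff] using hc z hz

theorem hasPuncturedPowerSeries_sq_mul_deriv_div_sq {f : ℂ → ℂ} {c₁ : ℂ} {B : ℕ → ℂ}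
    (hf : AnalyticAt ℂ f 0) (hfne : ∀ᶠ z in 𝓝[≠] (0 : ℂ), f z ≠ 0)
    (hψ : HasPuncturedPowerSeries (seqCons c₁ fun n => B n / (n + 1)) (fun z => z⁻¹ - (f z)⁻¹)) :
    HasPuncturedPowerSeries (seqCons 1 (seqCons 0 B)) (fun z => z ^ 2 * deriv f z / f z ^ 2) := by
  have hψ' : HasPuncturedPowerSeries B (deriv fun z => z⁻¹ - (f z)⁻¹) := by
    convert hψ.deriv using 2 with n
    change B n = (n + 1) * (B n / (n + 1))
    field_simp
  refine ((hψ'.seqCons 0).seqCons 1).congr ?_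
  filter_upwards [nhdsWithin_le_nhds hf.eventually_analyticAt, hfne, self_mem_nhdsWithin]
    with z hfz hfz0 (hz0 : z ≠ 0)
  have hderiv : HasDerivAt (fun w => w⁻¹ - (f w)⁻¹) _ z :=
    (hasDerivAt_inv hz0).sub (hfz.differentiableAt.hasDerivAt.inv hfz0)
  rw [hderiv.deriv]
  field_simp
  ring

theorem sum_antidiagonal_seqCons_one_zero {R : Type*} [CommSemiring R] (G E : ℕ → R) (q : ℕ) :
    ∑ kl ∈ antidiagonal (q + 2), seqCons 1 (seqCons 0 G) kl.1 * E kl.2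
      = E (q + 2) + ∑ j ∈ Finset.range (q + 1), G (q - j) * E j := by
  rw [Finset.Nat.sum_antidiagonal_succ, Finset.Nat.sum_antidiagonal_succ,
    ← Finset.Nat.sum_antidiagonal_swap]
  simp [seqCons, Finset.Nat.sum_antidiagonal_eq_sum_range_succ (fun j i => G i * E j)]

theorem sum_antidiagonal_seqCons_eq (β₁ c : ℕ → ℂ) {p : ℕ} (hp : 2 ≤ p) :
    ∑ kl ∈ antidiagonal p, seqCons 1 (seqCons 0 fun n => -β₁ (n + 1)) kl.1 * ((kl.2 + 1) * c kl.2)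
      = (p + 1) * c p - ∑ j ∈ Finset.range (p - 1), (j + 1) * c j * β₁ (p - 1 - j) := by
  obtain ⟨q, rfl⟩ := Nat.exists_eq_add_of_le' hp
  rw [sum_antidiagonal_seqCons_one_zero _ (fun j => ((j : ℂ) + 1) * c j),
    show q + 2 - 1 = q + 1 from rfl, sub_eq_add_neg, ← Finset.sum_neg_distrib]
  push_cast
  congr 1
  refine Finset.sum_congr rfl fun j hj => ?_
  rw [show q + 1 - j = q - j + 1 by have := Finset.mem_range.mp hj; omega]
  ring

theorem stmt_10_general (f : ℂ → ℂ) (c : ℕ → ℂ)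
    (hf0 : f 0 = 0) (hf1 : deriv f 0 = 1)
    (hc : ∀ z ∈ ball (0 : ℂ) 1, HasSum (fun n : ℕ => c n * z ^ (n + 1)) (f z))
    (a : ℕ → ℂ)
    (ha : ∀ᶠ z in 𝓝[≠] (0 : ℂ),
      HasSum (fun p : ℕ => a p * z ^ p) (z ^ 2 * (deriv f z) ^ 2 / (f z) ^ 2))
    (β : ℕ → ℕ → ℂ)
    (hβ : ∃ ε > (0 : ℝ), ∀ u v : ℂ, u ≠ 0 → v ≠ 0 → ‖u‖ < ε → ‖v‖ < ε → u ≠ v →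
      HasSum (fun nk : ℕ × ℕ =>
          -((1 / ((nk.1 : ℂ) + 1)) * β (nk.1 + 1) (nk.2 + 1) * u ^ (nk.1 + 1) * v ^ (nk.2 + 1)))
        (Complex.log (((f u)⁻¹ - (f v)⁻¹) / (u⁻¹ - v⁻¹)))) :
    a 1 = 2 * c 1 ∧
      ∀ p : ℕ, 2 ≤ p →
        a p = ((p : ℂ) + 1) * c p -
          ∑ j ∈ Finset.range (p - 1), ((j : ℂ) + 1) * c j * β (p - 1 - j) 1 := by
  obtain ⟨ε, hε, hβ⟩ := hβ
  have hp := hasFPowerSeriesAt_of_hasSum_ball one_pos hc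
  have hfne : ∀ᶠ z in 𝓝[≠] (0 : ℂ), f z ≠ 0 :=
    (hf1 ▸ hp.differentiableAt.hasDerivAt : HasDerivAt f 1 0).eventually_ne one_ne_zero
  have hf' : HasPuncturedPowerSeries (fun n => (n + 1) * c n) (deriv f) := by
    simpa [coeff_ofScalars, seqCons] using
      hp.hasFPowerSeriesAt_deriv.hasPuncturedPowerSeries
  have hψ := hasPuncturedPowerSeries_inv_sub_inv hp hf0 hf1
    (b := fun n k => -β (n + 1) (k + 1) / (n + 1)) hε fun u v hu hv hu' hv' huv => by
      simpa [neg_mul, div_eq_inv_mul, mul_assoc] using hβ u v hu hv hu' hv' huv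
  have hG := hasPuncturedPowerSeries_sq_mul_deriv_div_sq hp.analyticAt hfne hψ
  have ha' : HasPuncturedPowerSeries a _ := ha
  have hcoeff := ha'.unique ((hG.mul hf').congr (Eventually.of_forall fun z => by ring))
  refine ⟨?_, fun p hp => hcoeff ▸ sum_antidiagonal_seqCons_eq (β · 1) c hp⟩
  simp only [hcoeff, seqCons, Finset.Nat.sum_antidiagonal_succ, antidiagonal_zero,
    Finset.sum_singleton]
  push_cast
  ring

/-- With `a_p^p` defined by `z² f'(z)²/f(z)² = 1 + ∑_{p≥1} a_p^p z^p` and with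
`β_{n,k}` the Grunsky coefficients of `h(z) = 1/f(1/z)`:
`a_1^1 = 2c_1` and for `p ≥ 2`,
`a_p^p = (p+1) c_p - [β_{p-1,1} + 2c_1 β_{p-2,1} + ⋯ + (p-1) c_{p-2} β_{1,1}]`. -/
theorem stmt_10 (f : ℂ → ℂ) (c : ℕ → ℂ)
    (hf : DifferentiableOn ℂ f (ball (0 : ℂ) 1))
    (hinj : Set.InjOn f (ball (0 : ℂ) 1))
    (hf0 : f 0 = 0) (hf1 : deriv f 0 = 1) (hc0 : c 0 = 1)
    (hc : ∀ z ∈ ball (0 : ℂ) 1, HasSum (fun n : ℕ => c n * z ^ (n + 1)) (f z))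
    (a : ℕ → ℂ) (ha0 : a 0 = 1)
    (ha : ∀ᶠ z in 𝓝[≠] (0 : ℂ),
      HasSum (fun p : ℕ => a p * z ^ p) (z ^ 2 * (deriv f z) ^ 2 / (f z) ^ 2))
    (β : ℕ → ℕ → ℂ)
    (hβ : ∃ ε > (0 : ℝ), ∀ u v : ℂ, u ≠ 0 → v ≠ 0 → ‖u‖ < ε → ‖v‖ < ε → u ≠ v →
      HasSum (fun nk : ℕ × ℕ =>
          -((1 / ((nk.1 : ℂ) + 1)) * β (nk.1 + 1) (nk.2 + 1) * u ^ (nk.1 + 1) * v ^ (nk.2 + 1)))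
        (Complex.log (((f u)⁻¹ - (f v)⁻¹) / (u⁻¹ - v⁻¹)))) :
    a 1 = 2 * c 1 ∧
      ∀ p : ℕ, 2 ≤ p →
        a p = ((p : ℂ) + 1) * c p -
          ∑ j ∈ Finset.range (p - 1), ((j : ℂ) + 1) * c j * β (p - 1 - j) 1 :=
  stmt_10_general f c hf0 hf1 hc a ha β hβ
end

section
/- Let B_n ∈ ℤ[c_1, ..., c_n] (n ≥ 0, B_0 = 1) be the coefficients of the multiplicative inverse of the formal power series f'(z) = 1 + ∑_{n≥1} (n+1) c_n z^n, i.e. 1/f'(z) = 1 + ∑_{n≥1} B_n z^n (so B_1 = −2c_1, B_2 = 4c_1² − 3c_2, ...). Then for every k ≥ 1 and every polynomial P in the variables c_1, ..., c_N, ∂P/∂c_k = ∑_{n≥0} B_n · (L_{k+n} P), where the sum is finite because L_{k+n} P = 0 once k + n > N; in particular the coefficients B_n do not depend on k. -/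
/-!
Write `a_n` for the coefficients of `f'` and `D_j = ∂P/∂c_{k+j}`, which vanishes for `j > N`.
Expanding `L_{k+m} P = ∑_n a_n D_{m+n}`, the right-hand side becomes `∑_t (∑_{n+m=t} a_n B_m) D_t`;
the inner sums are the coefficients of `f' · (1/f') = 1`, so only `D_0 = ∂P/∂c_k` survives.
-/

open MvPolynomial

/-- The operator `L_k = ∂/∂c_k + ∑_{n≥1} (n+1) c_n ∂/∂c_{n+k}`, truncated at `n ≤ N`, acting on
the polynomial ring `ℂ[c_1, c_2, …]` (the variable `X n` stands for `c_n`, `n ≥ 1`).  On a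
polynomial whose variables lie among `c_1, …, c_N` with indices `n + k > N` contributing `0`,
this truncation agrees with the full (formally infinite) operator. -/
noncomputable def Lop (N k : ℕ) (Q : MvPolynomial ℕ ℂ) : MvPolynomial ℕ ℂ :=
  pderiv k Q + ∑ n ∈ Finset.Icc 1 N, ((n : MvPolynomial ℕ ℂ) + 1) * X n * pderiv (n + k) Q

open Finset

theorem sum_range_sum_range_eq_sum_range_sum_antidiagonal {M : Type*} [AddCommMonoid M]
    {N : ℕ} {f : ℕ → ℕ → M} (hf : ∀ m n, N < m + n → f m n = 0) :
    ∑ m ∈ range (N + 1), ∑ n ∈ range (N + 1), f m n =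
      ∑ t ∈ range (N + 1), ∑ p ∈ antidiagonal t, f p.1 p.2 := by
  rw [← sum_product', ← sum_filter_of_ne (p := fun p => p.1 + p.2 ≤ N)
    fun p _ h => by contrapose! h; exact hf _ _ h]
  rw [← sum_fiberwise_of_maps_to (g := fun p => p.1 + p.2) (t := range (N + 1))
    fun p hp => by simp only [mem_filter] at hp; simpa [Nat.lt_succ_iff] using hp.2]
  refine sum_congr rfl fun t ht => sum_congr ?_ fun _ _ => rfl
  ext ⟨m, n⟩
  simp only [mem_range, mem_filter, mem_product, HasAntidiagonal.mem_antidiagonal] at ht ⊢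
  omega

theorem sum_mul_sum_mul_eq_of_mk_mul_mk_eq_one {R : Type*} [CommSemiring R] {a b : ℕ → R}
    (hab : PowerSeries.mk a * PowerSeries.mk b = 1) {N : ℕ} {D : ℕ → R}
    (hD : ∀ j, N < j → D j = 0) :
    ∑ m ∈ range (N + 1), b m * ∑ n ∈ range (N + 1), a n * D (m + n) = D 0 := by
  have hcoeff (t : ℕ) : ∑ p ∈ antidiagonal t, a p.1 * b p.2 = if t = 0 then 1 else 0 := by
    simpa [PowerSeries.coeff_mul, PowerSeries.coeff_one] using
      congrArg (PowerSeries.coeff t) hab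
  calc ∑ m ∈ range (N + 1), b m * ∑ n ∈ range (N + 1), a n * D (m + n)
      = ∑ m ∈ range (N + 1), ∑ n ∈ range (N + 1), a n * b m * D (n + m) := by
        simp only [mul_sum, add_comm, mul_left_comm, mul_comm]
    _ = ∑ t ∈ range (N + 1), (∑ p ∈ antidiagonal t, a p.1 * b p.2) * D t := by
        rw [sum_comm, sum_range_sum_range_eq_sum_range_sum_antidiagonal
          fun n m h => by rw [hD _ h, mul_zero]]
        refine sum_congr rfl fun t _ => ?_
        rw [sum_mul]
        exact sum_congr rfl fun p hp => by rw [HasAntidiagonal.mem_antidiagonal.mp hp]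
    _ = D 0 := by simp [hcoeff]

theorem pderiv_eq_zero_of_vars_subset_Icc {R : Type*} [CommSemiring R] {N j : ℕ}
    {P : MvPolynomial ℕ R}     (hP : P.vars ⊆ Icc 1 N) (hj : N < j) : pderiv j P = 0 :=
  pderiv_eq_zero_of_notMem_vars fun h => by have := mem_Icc.mp (hP h); omega

noncomputable def derivCoeff (n : ℕ) : MvPolynomial ℕ ℂ :=
  if n = 0 then 1 else ((n : MvPolynomial ℕ ℂ) + 1) * X n

theorem Lop_eq_sum_range (N j : ℕ) (Q : MvPolynomial ℕ ℂ) :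
    Lop N j Q = ∑ n ∈ range (N + 1), derivCoeff n * pderiv (j + n) Q := by
  rw [Lop, sum_range_succ', ← Ico_add_one_right_eq_Icc, sum_Ico_eq_sum_range]
  simp [derivCoeff, add_comm, add_left_comm]

theorem stmt_11_general (B : ℕ → MvPolynomial ℕ ℂ)
    (hB : (PowerSeries.mk fun n => if n = 0 then 1 else ((n : MvPolynomial ℕ ℂ) + 1) * X n) *
        PowerSeries.mk B = 1) :
    ∀ (N : ℕ) (P : MvPolynomial ℕ ℂ), P.vars ⊆ Finset.Icc 1 N →
      ∀ k : ℕ, 1 ≤ k →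
        pderiv k P = ∑ m ∈ Finset.range (N + 1), B m * Lop N (k + m) P := by
  intro N P hP k _
  have hD (j : ℕ) (hj : N < j) : pderiv (k + j) P = 0 :=
    pderiv_eq_zero_of_vars_subset_Icc hP (by omega)
  simpa [Lop_eq_sum_range, add_assoc] using
    (sum_mul_sum_mul_eq_of_mk_mul_mk_eq_one (a := derivCoeff) hB hD).symm

/-- Let `B_n` (with `B_0 = 1`) be the coefficients of the multiplicative inverse
of the formal power series `f'(z) = 1 + ∑_{n≥1} (n+1) c_n z^n`.  Then for every `k ≥ 1` and every
polynomial `P` in the variables `c_1, …, c_N`,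
`∂P/∂c_k = ∑_{n} B_n · (L_{k+n} P)`, the sum being finite since `L_{k+n} P = 0` once `k + n > N`
(so that summing over `n ≤ N` suffices); in particular the `B_n` do not depend on `k`. -/
theorem stmt_11 (B : ℕ → MvPolynomial ℕ ℂ) (hB0 : B 0 = 1)
    (hB : (PowerSeries.mk fun n => if n = 0 then 1 else ((n : MvPolynomial ℕ ℂ) + 1) * X n) *
        PowerSeries.mk B = 1) :
    ∀ (N : ℕ) (P : MvPolynomial ℕ ℂ), P.vars ⊆ Finset.Icc 1 N →
      ∀ k : ℕ, 1 ≤ k →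
        pderiv k P = ∑ m ∈ Finset.range (N + 1), B m * Lop N (k + m) P :=
  stmt_11_general B hB
end
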